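/- arXiv:2406.04925 — 4 statements merged into one kernel-verified Lean document; each statement's English description precedes it below -/
import Mathlib

section
/- With M, T₊, T∘ and the product · as above, the translation group T₊ normalises T∘ if and only if the R-algebra (M,+,·) is 3-nilpotent, i.e. a·b·c = 0 for all a,b,c ∈ M. -/
/-- The translation group `T₊` normalises the regular abelian subgroup
`T∘ = {τ_a = γ_a σ_a}` of `Aff(M)` if and only if the induced `R`-algebra product
`a·b = γ_b a − a` is 3-nilpotent, i.e. `a·b·c = 0` for all `a, b, c`. -/
theorem translations_normalize_iff_threeNilpotent {R M : Type*} [CommRing R]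
    [AddCommGroup M] [Module R M] [Module.Free R M] [Module.Finite R M]
    (τ : M → Equiv.Perm M) (γ : M → (M ≃ₗ[R] M))
    (hτ : ∀ a x : M, τ a x = γ a x + a)
    (hone : τ 0 = 1)
    (hclosed : ∀ a b : M, ∃ c : M, τ a * τ b = τ c)
    (hinv : ∀ a : M, ∃ b : M, (τ a)⁻¹ = τ b)
    (hcomm : ∀ a b : M, τ a * τ b = τ b * τ a) :
    (∀ a b : M, ∃ c : M,
        (Equiv.addRight a : Equiv.Perm M) * τ b * ((Equiv.addRight a : Equiv.Perm M))⁻¹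
          = τ c)
      ↔ (∀ a b c : M, γ c (γ b a - a) - (γ b a - a) = 0) := by
  have h0 : ∀ a : M, τ a 0 = a := fun a => by simp [hτ]
  -- composition law: γ (γ a b + a) = γ a ∘ γ b
  have hcomp : ∀ a b x : M, γ (γ a b + a) x = γ a (γ b x) := by
    intro a b x
    obtain ⟨c, hc⟩ := hclosed a b
    have hx : ∀ y : M, τ a (τ b y) = τ c y := fun y => by
      have := congrArg (fun f : Equiv.Perm M => f y) hc
      simpa using this
    have hc0 : γ a b + a = c := by
      have := hx 0
      rw [h0] at this
      rw [hτ] at this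
      rw [this, h0]
    have h1 := hx x
    rw [hτ, hτ, hτ, map_add, add_assoc, hc0] at h1
    rw [hc0]
    exact (add_right_cancel h1).symm
  -- commutativity at 0
  have hcommc : ∀ a b : M, γ a b + a = γ b a + b := by
    intro a b
    have := congrArg (fun f : Equiv.Perm M => f 0) (hcomm a b)
    simpa [h0, hτ] using this
  -- the inverse map ι
  choose ι hι using hinv
  have hιl : ∀ b x : M, γ (ι b) (γ b x) = x := by
    intro b x
    have h1 : τ (ι b) * τ b = 1 := by rw [← hι b]; exact inv_mul_cancel _
    have hx : ∀ y : M, τ (ι b) (τ b y) = y := fun y => by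
      have := congrArg (fun f : Equiv.Perm M => f y) h1
      simpa using this
    have h00 : γ (ι b) b + ι b = 0 := by
      have := hx 0
      rw [h0] at this
      rw [hτ] at this
      exact this
    have := hx x
    rw [hτ, hτ, map_add, add_assoc, h00, add_zero] at this
    exact this
  have hιr : ∀ b x : M, γ b (γ (ι b) x) = x := by
    intro b x
    have h1 : τ b * τ (ι b) = 1 := by rw [← hι b]; exact mul_inv_cancel _
    have hx : ∀ y : M, τ b (τ (ι b) y) = y := fun y => by
      have := congrArg (fun f : Equiv.Perm M => f y) h1
      simpa using this
    have h00 : γ b (ι b) + b = 0 := by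
      have := hx 0
      rw [h0] at this
      rw [hτ] at this
      exact this
    have := hx x
    rw [hτ, hτ, map_add, add_assoc, h00, add_zero] at this
    exact this
  have hdd : ∀ b x : M, γ (ι (ι b)) x = γ b x := by
    intro b x
    conv_lhs => rw [← hιl b x]
    exact hιl (ι b) (γ b x)
  -- key identity E1 : γ (b - a·b) ∘ γ b = γ (a·ιb) ∘ γ b rearranged
  have E1 : ∀ a b x : M, γ (b - (γ b a - a)) x = γ (γ (ι b) a - a) (γ b x) := by
    intro a b x
    have h1 : γ b (γ (ι b) a - a) + b = b - (γ b a - a) := by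
      rw [map_sub, hιr b a]
      abel
    have h2 := hcommc (γ (ι b) a - a) b
    calc γ (b - (γ b a - a)) x
        = γ (γ (γ (ι b) a - a) b + (γ (ι b) a - a)) x := by rw [h2, h1]
      _ = γ (γ (ι b) a - a) (γ b x) := hcomp _ b x
  -- conjugation formula
  have hconj : ∀ a b x : M,
      ((Equiv.addRight a : Equiv.Perm M) * τ b * ((Equiv.addRight a : Equiv.Perm M))⁻¹) x
        = γ b x + (b - (γ b a - a)) := by
    intro a b x
    have : ((Equiv.addRight a : Equiv.Perm M))⁻¹ x = x - a := by
      simp [Equiv.Perm.inv_def, sub_eq_add_neg]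
    rw [Equiv.Perm.mul_apply, Equiv.Perm.mul_apply, this, hτ, map_sub]
    simp only [Equiv.coe_addRight]
    abel
  constructor
  · intro hN a b c
    have key : ∀ a b y : M, γ (γ (ι b) a - a) y = y := by
      intro a b y
      obtain ⟨c, hc⟩ := hN a b
      have hx : ∀ x : M, γ b x + (b - (γ b a - a)) = γ c x + c := fun x => by
        rw [← hconj a b x, hc, hτ]
      have hc0 : b - (γ b a - a) = c := by
        have := hx 0
        simpa using this
      have hγ : ∀ x : M, γ (b - (γ b a - a)) x = γ b x := by
        intro x
        have := hx x
        rw [hc0] at this ⊢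
        exact (add_right_cancel this).symm
      have hA : γ (γ (ι b) a - a) (γ b (γ (ι b) y)) = γ b (γ (ι b) y) := by
        rw [← E1 a b (γ (ι b) y), hγ]
      rwa [hιr b y] at hA
    have hu := key a (ι b) c
    rw [hdd b a] at hu
    have h2 := hcommc c (γ b a - a)
    rw [hu] at h2
    rw [add_comm c (γ b a - a)] at h2
    rw [add_right_cancel h2]
    simp
  · intro hnil a b
    refine ⟨b - (γ b a - a), ?_⟩
    ext x
    rw [hconj a b x, hτ]
    have h1 := E1 a b x
    have h3 := hnil a (ι b) (γ b x)
    rw [sub_eq_zero] at h3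
    have h4 := hcommc (γ (ι b) a - a) (γ b x)
    rw [h3, add_comm (γ (ι b) a - a) (γ b x)] at h4
    have h5 : γ (γ (ι b) a - a) (γ b x) = γ b x := add_right_cancel h4
    rw [h1, h5]
end

section
/- Let A be a commutative R-algebra (possibly non-unital), B ⊆ A a subalgebra, and I ⊆ Ann(A) an ideal of A with I ∩ (A·A) = {0}. Then: (i) A is isoclinic to A ⊕ T for any R-algebra T with T·T = 0; (ii) A is isoclinic to A/I; (iii) A is isoclinic to B (via the inclusion-induced maps) if and only if A = B + Ann(A). -/
/-- The annihilator `Ann(A) = {a : a·A = 0}` of a (non-unital) commutative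
`R`-algebra, as a submodule. -/
def mulAnn (R A : Type*) [CommRing R] [NonUnitalCommRing A] [Module R A]
    [IsScalarTower R A A] : Submodule R A where
  carrier := {a | ∀ x : A, a * x = 0}
  add_mem' := by
    intro a b ha hb
    intro x
    simp [add_mul, ha x, hb x]
  zero_mem' := by intro x; simp
  smul_mem' := by
    intro r a ha
    intro x
    rw [smul_mul_assoc, ha x, smul_zero]

/-- The square `A·A` of a (non-unital) commutative `R`-algebra: the `R`-submodule
generated by all products. -/
def mulSq (R A : Type*) [CommRing R] [NonUnitalCommRing A] [Module R A]
    [IsScalarTower R A A] : Submodule R A :=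
  Submodule.span R {x : A | ∃ a b : A, x = a * b}

/-- Isoclinism of (non-unital) commutative `R`-algebras: `R`-module isomorphisms
`ψ : A/Ann(A) ≃ B/Ann(B)` and `φ : A·A ≃ B·B` compatible with the induced products. -/
def IsIsoclinic (R A B : Type*) [CommRing R]
    [NonUnitalCommRing A] [Module R A] [IsScalarTower R A A]
    [NonUnitalCommRing B] [Module R B] [IsScalarTower R B B] : Prop :=
  ∃ ψ : (A ⧸ mulAnn R A) ≃ₗ[R] (B ⧸ mulAnn R B),
    ∃ φ : mulSq R A ≃ₗ[R] mulSq R B,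
      ∀ (a b : A) (a' b' : B),
        ψ (Submodule.Quotient.mk a) = Submodule.Quotient.mk a' →
        ψ (Submodule.Quotient.mk b) = Submodule.Quotient.mk b' →
        (φ ⟨a * b, Submodule.subset_span ⟨a, b, rfl⟩⟩ : B) = a' * b'

section Aux

variable {R A₁ A₂ : Type*} [CommRing R]
    [NonUnitalCommRing A₁] [Module R A₁] [IsScalarTower R A₁ A₁]
    [NonUnitalCommRing A₂] [Module R A₂] [IsScalarTower R A₂ A₂]

lemma mulAnn_mul_congr {a a₀ b b₀ : A₁} (ha : a - a₀ ∈ mulAnn R A₁)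
    (hb : b - b₀ ∈ mulAnn R A₁) : a * b = a₀ * b₀ := by
  have h1 : (a - a₀) * b₀ = 0 := ha b₀
  have h2 : (b - b₀) * a = 0 := hb a
  have : a * b - a₀ * b₀ = (a - a₀) * b₀ + (b - b₀) * a := by
    rw [sub_mul, sub_mul, mul_comm b a, mul_comm b₀ a]; abel
  rw [← sub_eq_zero, this, h1, h2, add_zero]

lemma mul_mem_mulSq (a b : A₁) : a * b ∈ mulSq R A₁ :=
  Submodule.subset_span ⟨a, b, rfl⟩

theorem master_iso (g : A₁ →ₗ[R] A₂) (hmul : ∀ x y : A₁, g (x * y) = g x * g y)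
    (hann : ∀ a : A₁, g a ∈ mulAnn R A₂ ↔ a ∈ mulAnn R A₁)
    (hsurj : ∀ c : A₂, ∃ a : A₁, g a - c ∈ mulAnn R A₂)
    (hinj : ∀ x ∈ mulSq R A₁, g x = 0 → x = 0)
    (hmap : Submodule.map g (mulSq R A₁) = mulSq R A₂) :
    ∃ ψ : (A₁ ⧸ mulAnn R A₁) ≃ₗ[R] (A₂ ⧸ mulAnn R A₂),
      ∃ φ : mulSq R A₁ ≃ₗ[R] mulSq R A₂,
        (∀ a : A₁, ψ (Submodule.Quotient.mk a) = Submodule.Quotient.mk (g a)) ∧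
        (∀ x : mulSq R A₁, (φ x : A₂) = g (x : A₁)) := by
  have hle : mulAnn R A₁ ≤ Submodule.comap g (mulAnn R A₂) :=
    fun a ha => (hann a).mpr ha
  set ψ₀ : (A₁ ⧸ mulAnn R A₁) →ₗ[R] (A₂ ⧸ mulAnn R A₂) :=
    Submodule.mapQ (mulAnn R A₁) (mulAnn R A₂) g hle with hψ₀
  have hψap : ∀ a : A₁, ψ₀ (Submodule.Quotient.mk a) = Submodule.Quotient.mk (g a) :=
    fun a => Submodule.mapQ_apply _ _ _ _
  have hψinj : Function.Injective ψ₀ := by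
    rw [injective_iff_map_eq_zero]
    intro x hx
    obtain ⟨a, rfl⟩ := Submodule.Quotient.mk_surjective _ x
    rw [hψap, Submodule.Quotient.mk_eq_zero] at hx
    rw [Submodule.Quotient.mk_eq_zero]
    exact (hann a).mp hx
  have hψsurj : Function.Surjective ψ₀ := by
    intro y
    obtain ⟨c, rfl⟩ := Submodule.Quotient.mk_surjective _ y
    obtain ⟨a, ha⟩ := hsurj c
    exact ⟨Submodule.Quotient.mk a, by rw [hψap]; exact (Submodule.Quotient.eq _).mpr ha⟩
  set φ₀ : (mulSq R A₁ : Submodule R A₁) →ₗ[R] (mulSq R A₂ : Submodule R A₂) :=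
    g.restrict (fun x hx => hmap ▸ ⟨x, hx, rfl⟩) with hφ₀
  have hφap : ∀ x : mulSq R A₁, (φ₀ x : A₂) = g (x : A₁) := fun x => rfl
  have hφinj : Function.Injective φ₀ := by
    rw [injective_iff_map_eq_zero]
    intro x hx
    have : g (x : A₁) = 0 := by rw [← hφap x, hx]; rfl
    exact Subtype.ext (hinj _ x.2 this)
  have hφsurj : Function.Surjective φ₀ := by
    rintro ⟨y, hy⟩
    rw [← hmap] at hy
    obtain ⟨x, hx, hgx⟩ := hy
    exact ⟨⟨x, hx⟩, Subtype.ext hgx⟩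
  exact ⟨LinearEquiv.ofBijective ψ₀ ⟨hψinj, hψsurj⟩,
    LinearEquiv.ofBijective φ₀ ⟨hφinj, hφsurj⟩, hψap, hφap⟩

theorem master_compat (g : A₁ →ₗ[R] A₂) (hmul : ∀ x y : A₁, g (x * y) = g x * g y)
    (ψ : (A₁ ⧸ mulAnn R A₁) ≃ₗ[R] (A₂ ⧸ mulAnn R A₂))
    (φ : mulSq R A₁ ≃ₗ[R] mulSq R A₂)
    (hψ : ∀ a : A₁, ψ (Submodule.Quotient.mk a) = Submodule.Quotient.mk (g a))
    (hφ : ∀ x : mulSq R A₁, (φ x : A₂) = g (x : A₁)) :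
    ∀ (a b : A₁) (a' b' : A₂),
      ψ (Submodule.Quotient.mk a) = Submodule.Quotient.mk a' →
      ψ (Submodule.Quotient.mk b) = Submodule.Quotient.mk b' →
      (φ ⟨a * b, Submodule.subset_span ⟨a, b, rfl⟩⟩ : A₂) = a' * b' := by
  intro a b a' b' ha hb
  rw [hψ] at ha hb
  rw [Submodule.Quotient.eq] at ha hb
  rw [hφ]
  simpa [hmul] using mulAnn_mul_congr ha hb
end Aux

section Parts

variable {R A T C B : Type*} [CommRing R]
    [NonUnitalCommRing A] [Module R A] [IsScalarTower R A A]
    [NonUnitalCommRing T] [Module R T] [IsScalarTower R T T]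
    [NonUnitalCommRing C] [Module R C] [IsScalarTower R C C]
    [NonUnitalCommRing B] [Module R B] [IsScalarTower R B B]

-- Part (i) data
theorem part1_data (hT : ∀ x y : T, x * y = 0) :
    ∃ ψ : (A ⧸ mulAnn R A) ≃ₗ[R] ((A × T) ⧸ mulAnn R (A × T)),
      ∃ φ : mulSq R A ≃ₗ[R] mulSq R (A × T),
        (∀ a : A, ψ (Submodule.Quotient.mk a)
            = Submodule.Quotient.mk ((LinearMap.inl R A T) a)) ∧
        (∀ x : mulSq R A, (φ x : A × T) = (LinearMap.inl R A T) (x : A)) := by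
  set g := LinearMap.inl R A T with hg
  have hgap : ∀ a : A, g a = (a, 0) := fun a => rfl
  have hmul : ∀ x y : A, g (x * y) = g x * g y := by
    intro x y
    rw [hgap, hgap, hgap]
    exact Prod.ext rfl (by simp [hgap, hT])
  have hann : ∀ a : A, g a ∈ mulAnn R (A × T) ↔ a ∈ mulAnn R A := by
    intro a
    constructor
    · intro h x
      have := h (x, 0)
      exact congrArg Prod.fst this
    · intro h q
      exact Prod.ext (h q.1) (by simp [hgap, hT])
  apply master_iso g hmul hann
  · intro c
    refine ⟨c.1, fun q => Prod.ext ?_ ?_⟩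
    · show (c.1 - c.1) * q.1 = 0
      simp
    · show (0 - c.2) * q.2 = 0
      rw [zero_sub, neg_mul, hT, neg_zero]
  · intro x _ h
    have := congrArg Prod.fst h
    simpa [hgap] using this
  · unfold mulSq
    rw [Submodule.map_span]
    congr 1
    ext p
    constructor
    · rintro ⟨x, ⟨a, b, rfl⟩, rfl⟩
      exact ⟨(a, 0), (b, 0), Prod.ext rfl (by simp [hgap, hT])⟩
    · rintro ⟨u, v, rfl⟩
      exact ⟨u.1 * v.1, ⟨u.1, v.1, rfl⟩, Prod.ext rfl (by simp [hg, hT])⟩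

-- Part (ii) data
theorem part2_data
    (I : Submodule R A) (hIann : I ≤ mulAnn R A) (hIsq : I ⊓ mulSq R A = ⊥)
    (f : A →ₗ[R] C) (hfmul : ∀ x y : A, f (x * y) = f x * f y)
    (hfsurj : Function.Surjective f) (hker : LinearMap.ker f = I) :
    ∃ ψ : (A ⧸ mulAnn R A) ≃ₗ[R] (C ⧸ mulAnn R C),
      ∃ φ : mulSq R A ≃ₗ[R] mulSq R C,
        (∀ a : A, ψ (Submodule.Quotient.mk a) = Submodule.Quotient.mk (f a)) ∧
        (∀ x : mulSq R A, (φ x : C) = f (x : A)) := by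
  have hzero : ∀ x : A, f x = 0 → x ∈ mulSq R A → x = 0 := by
    intro x hx hsq
    have hI : x ∈ I := by rw [← hker]; exact hx
    have : x ∈ I ⊓ mulSq R A := ⟨hI, hsq⟩
    rw [hIsq] at this
    exact this
  have hann : ∀ a : A, f a ∈ mulAnn R C ↔ a ∈ mulAnn R A := by
    intro a
    constructor
    · intro h x
      have h1 : f (a * x) = 0 := by rw [hfmul]; exact h (f x)
      exact hzero _ h1 (mul_mem_mulSq a x)
    · intro h c
      obtain ⟨x, rfl⟩ := hfsurj c
      rw [← hfmul, h x, map_zero]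
  apply master_iso f hfmul hann
  · intro c
    obtain ⟨a, rfl⟩ := hfsurj c
    exact ⟨a, by simp⟩
  · intro x hx h
    exact hzero x h hx
  · unfold mulSq
    rw [Submodule.map_span]
    congr 1
    ext c
    constructor
    · rintro ⟨x, ⟨a, b, rfl⟩, rfl⟩
      exact ⟨f a, f b, (hfmul a b)⟩
    · rintro ⟨u, v, rfl⟩
      obtain ⟨a, rfl⟩ := hfsurj u
      obtain ⟨b, rfl⟩ := hfsurj v
      exact ⟨a * b, ⟨a, b, rfl⟩, hfmul a b⟩

-- Part (iii) data (the ⇐ direction)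
theorem part3_data
    (ι : B →ₗ[R] A) (hιinj : Function.Injective ι)
    (hιmul : ∀ x y : B, ι (x * y) = ι x * ι y)
    (h : ∀ a : A, ∃ b : B, a - ι b ∈ mulAnn R A) :
    ∃ Ψ : (B ⧸ mulAnn R B) ≃ₗ[R] (A ⧸ mulAnn R A),
      ∃ Φ : mulSq R B ≃ₗ[R] mulSq R A,
        (∀ b : B, Ψ (Submodule.Quotient.mk b) = Submodule.Quotient.mk (ι b)) ∧
        (∀ x : mulSq R B, (Φ x : A) = ι (x : B)) := by
  have hann : ∀ b : B, ι b ∈ mulAnn R A ↔ b ∈ mulAnn R B := by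
    intro b
    constructor
    · intro hb b'
      apply hιinj
      rw [hιmul, map_zero]
      exact hb (ι b')
    · intro hb x
      obtain ⟨b', hx⟩ := h x
      have h1 : ι b * (x - ι b') = 0 := by rw [mul_comm]; exact hx (ι b)
      have h2 : ι b * ι b' = 0 := by rw [← hιmul, hb b', map_zero]
      calc ι b * x = ι b * ((x - ι b') + ι b') := by rw [sub_add_cancel]
        _ = ι b * (x - ι b') + ι b * ι b' := by rw [mul_add]
        _ = 0 := by rw [h1, h2, add_zero]
  apply master_iso ι hιmul hann
  · intro a
    obtain ⟨b, hb⟩ := h a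
    exact ⟨b, by simpa using (mulAnn R A).neg_mem hb⟩
  · intro x _ hx
    exact hιinj (by rw [hx, map_zero])
  · apply le_antisymm
    · rw [mulSq, Submodule.map_span, Submodule.span_le]
      rintro _ ⟨_, ⟨b, b', rfl⟩, rfl⟩
      rw [hιmul]
      exact mul_mem_mulSq _ _
    · rw [mulSq, Submodule.span_le]
      rintro _ ⟨a, b, rfl⟩
      obtain ⟨a₀, ha₀⟩ := h a
      obtain ⟨b₀, hb₀⟩ := h b
      refine ⟨a₀ * b₀, mul_mem_mulSq a₀ b₀, ?_⟩
      rw [hιmul]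
      exact (mulAnn_mul_congr ha₀ hb₀).symm

end Parts

/-- (i) `A` is isoclinic to `A ⊕ T` for any algebra `T` with `T·T = 0`;
(ii) `A` is isoclinic to `A/I` (realized as the codomain of any surjective algebra map
with kernel `I`), where `I ⊆ Ann(A)` is an ideal with `I ∩ A·A = 0`;
(iii) for a subalgebra `B ⊆ A` (realized by an embedding `ι`), `A` is isoclinic to `B`
via the inclusion-induced maps if and only if `A = B + Ann(A)`. -/
theorem isoclinism_hall_lemma {R A T C B : Type*} [CommRing R]
    [NonUnitalCommRing A] [Module R A] [IsScalarTower R A A]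
    [NonUnitalCommRing T] [Module R T] [IsScalarTower R T T]
    [NonUnitalCommRing C] [Module R C] [IsScalarTower R C C]
    [NonUnitalCommRing B] [Module R B] [IsScalarTower R B B]
    (hT : ∀ x y : T, x * y = 0)
    (I : Submodule R A) (hIann : I ≤ mulAnn R A) (hIsq : I ⊓ mulSq R A = ⊥)
    (hImul : ∀ x ∈ I, ∀ y : A, x * y ∈ I)
    (f : A →ₗ[R] C) (hfmul : ∀ x y : A, f (x * y) = f x * f y)
    (hfsurj : Function.Surjective f) (hker : LinearMap.ker f = I)
    (ι : B →ₗ[R] A) (hιinj : Function.Injective ι)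
    (hιmul : ∀ x y : B, ι (x * y) = ι x * ι y) :
    IsIsoclinic R A (A × T) ∧
    IsIsoclinic R A C ∧
    ((∃ ψ : (A ⧸ mulAnn R A) ≃ₗ[R] (B ⧸ mulAnn R B),
        ∃ φ : mulSq R A ≃ₗ[R] mulSq R B,
          (∀ (a b : A) (a' b' : B),
            ψ (Submodule.Quotient.mk a) = Submodule.Quotient.mk a' →
            ψ (Submodule.Quotient.mk b) = Submodule.Quotient.mk b' →
            (φ ⟨a * b, Submodule.subset_span ⟨a, b, rfl⟩⟩ : B) = a' * b') ∧
          (∀ b : B, ψ.symm (Submodule.Quotient.mk b) = Submodule.Quotient.mk (ι b)) ∧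
          (∀ x : mulSq R B, (φ.symm x : A) = ι (x : B)))
      ↔ (∀ a : A, ∃ b : B, a - ι b ∈ mulAnn R A)) := by
  
  refine ⟨?_, ?_, ?_⟩
  · obtain ⟨ψ, φ, hψ, hφ⟩ := part1_data (R := R) (A := A) hT
    have hmul : ∀ x y : A, (LinearMap.inl R A T) (x * y)
        = (LinearMap.inl R A T) x * (LinearMap.inl R A T) y :=
      fun x y => Prod.ext rfl (by simp)
    exact ⟨ψ, φ, master_compat _ hmul ψ φ hψ hφ⟩
  · obtain ⟨ψ, φ, hψ, hφ⟩ := part2_data I hIann hIsq f hfmul hfsurj hker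
    exact ⟨ψ, φ, master_compat _ hfmul ψ φ hψ hφ⟩
  · constructor
    · rintro ⟨ψ, φ, _, hψs, _⟩ a
      obtain ⟨b, hb⟩ := Submodule.Quotient.mk_surjective _ (ψ (Submodule.Quotient.mk a))
      refine ⟨b, (Submodule.Quotient.eq _).mp ?_⟩
      have : ψ.symm (Submodule.Quotient.mk b) = Submodule.Quotient.mk a := by
        rw [hb, LinearEquiv.symm_apply_apply]
      rw [← this, hψs b]
    · intro h
      obtain ⟨Ψ, Φ, hΨ, hΦ⟩ := part3_data ι hιinj hιmul h
      refine ⟨Ψ.symm, Φ.symm, ?_, ?_, ?_⟩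
      · intro a b a' b' ha hb
        have haa : a - ι a' ∈ mulAnn R A := by
          refine (Submodule.Quotient.eq _).mp ?_
          rw [← hΨ a', ← ha, LinearEquiv.apply_symm_apply]
        have hbb : b - ι b' ∈ mulAnn R A := by
          refine (Submodule.Quotient.eq _).mp ?_
          rw [← hΨ b', ← hb, LinearEquiv.apply_symm_apply]
        have key : a * b = ι (a' * b') := by
          rw [hιmul]
          exact mulAnn_mul_congr haa hbb
        have hΦeq : Φ ⟨a' * b', mul_mem_mulSq a' b'⟩
            = ⟨a * b, Submodule.subset_span ⟨a, b, rfl⟩⟩ :=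
          Subtype.ext (by rw [hΦ]; exact key.symm)
        have : Φ.symm ⟨a * b, Submodule.subset_span ⟨a, b, rfl⟩⟩
            = ⟨a' * b', mul_mem_mulSq a' b'⟩ := by
          rw [← hΦeq, LinearEquiv.symm_apply_apply]
        exact congrArg Subtype.val this
      · intro b
        rw [LinearEquiv.symm_symm]
        exact hΨ b
      · intro x
        rw [LinearEquiv.symm_symm]
        exact hΦ x
end

section
/- Let p be an odd prime and let Θ be an (n−1)×(n−1) symmetric matrix over ℤ_p of maximal rank (injective as a linear map). Then there exists a commutative, associative, torsion-free, 3-nilpotent ℤ_p-algebra structure on the free module M = ℤ_p^n such that: Ann(M) is the cyclic submodule spanned by the last basis vector e_n, and for all a,b ∈ span{e_1,…,e_{n−1}}, the product a·b equals (aΘbᵗ)·e_n. In particular M·M is cyclic. -/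
/-- any symmetric `(n−1)×(n−1)` matrix `Θ` over `ℤ_p` of maximal rank
is the defining matrix of a commutative, associative, 3-nilpotent algebra structure
on `ℤ_p^n` whose annihilator is the cyclic submodule spanned by `e_n` and whose
product on `span{e₁,…,e_{n−1}}` is `a·b = (aΘbᵗ)·e_n`; in particular `M·M` is
cyclic. -/
theorem algebra_of_defining_matrix {p n : ℕ} [Fact p.Prime] (hp : p ≠ 2)
    (hn : 0 < n)
    (Θ : Matrix (Fin (n - 1)) (Fin (n - 1)) ℤ_[p]) (hΘsymm : Θ.IsSymm)
    (hΘrank : ∀ v : Fin (n - 1) → ℤ_[p], Θ.mulVec v = 0 → v = 0) :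
    ∃ mul : (Fin n → ℤ_[p]) → (Fin n → ℤ_[p]) → (Fin n → ℤ_[p]),
      (∀ x y z, mul (x + y) z = mul x z + mul y z) ∧
      (∀ (r : ℤ_[p]) (x y), mul (r • x) y = r • mul x y) ∧
      (∀ x y, mul x y = mul y x) ∧
      (∀ x y z, mul (mul x y) z = mul x (mul y z)) ∧
      (∀ x y z, mul (mul x y) z = 0) ∧
      -- the annihilator is spanned by the last basis vector
      ({a : Fin n → ℤ_[p] | ∀ x, mul a x = 0}
        = ((Submodule.span ℤ_[p]
            {Pi.single (⟨n - 1, Nat.sub_lt hn Nat.one_pos⟩ : Fin n) (1 : ℤ_[p])} :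
            Submodule ℤ_[p] (Fin n → ℤ_[p])) : Set (Fin n → ℤ_[p]))) ∧
      -- on `span{e₁,…,e_{n−1}}` the product is `a·b = (aΘbᵗ)·e_n`
      (∀ a b : Fin n → ℤ_[p],
        a (⟨n - 1, Nat.sub_lt hn Nat.one_pos⟩ : Fin n) = 0 →
        b (⟨n - 1, Nat.sub_lt hn Nat.one_pos⟩ : Fin n) = 0 →
        mul a b
          = (∑ i : Fin (n - 1), ∑ j : Fin (n - 1),
              a (Fin.castLE (n.sub_le 1) i) * Θ i j * b (Fin.castLE (n.sub_le 1) j)) •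
            (Pi.single (⟨n - 1, Nat.sub_lt hn Nat.one_pos⟩ : Fin n) (1 : ℤ_[p]) :
              Fin n → ℤ_[p])) ∧
      -- in particular `M·M` is cyclic
      (∃ g : Fin n → ℤ_[p],
        Submodule.span ℤ_[p] {z : Fin n → ℤ_[p] | ∃ x y, z = mul x y}
          = Submodule.span ℤ_[p] {g}) := by
  set L : Fin n := ⟨n - 1, Nat.sub_lt hn Nat.one_pos⟩ with hLdef
  set e : Fin n → ℤ_[p] := Pi.single L 1 with hedef
  set ι : Fin (n - 1) → Fin n := Fin.castLE (n.sub_le 1) with hιdef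
  have hιne : ∀ i, ι i ≠ L := by
    intro i h
    have h2 : ((ι i : Fin n) : ℕ) = n - 1 := congrArg Fin.val h
    have h3 : ((ι i : Fin n) : ℕ) = (i : ℕ) := rfl
    have := i.isLt
    omega
  have heι : ∀ i, e (ι i) = 0 := fun i => Pi.single_eq_of_ne (hιne i) 1
  have heL : e L = 1 := Pi.single_eq_same L 1
  set B : (Fin n → ℤ_[p]) → (Fin n → ℤ_[p]) → ℤ_[p] :=
    fun x y => ∑ i, ∑ j, x (ι i) * Θ i j * y (ι j) with hBdef
  set mul : (Fin n → ℤ_[p]) → (Fin n → ℤ_[p]) → (Fin n → ℤ_[p]) :=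
    fun x y => B x y • e with hmuldef
  have hBsmul : ∀ (r : ℤ_[p]) (x y), B (r • x) y = r * B x y := by
    intro r x y
    simp only [hBdef, Pi.smul_apply, smul_eq_mul, Finset.mul_sum]
    exact Finset.sum_congr rfl fun i _ => Finset.sum_congr rfl fun j _ => by ring
  have hBe : ∀ (r : ℤ_[p]) (x), B (r • e) x = 0 := by
    intro r x
    rw [hBsmul]
    have : B e x = 0 := by
      simp only [hBdef]
      exact Finset.sum_eq_zero fun i _ => Finset.sum_eq_zero fun j _ => by
        rw [heι i]; ring
    rw [this, mul_zero]
  have hBcomm : ∀ x y, B x y = B y x := by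
    intro x y
    simp only [hBdef]
    rw [Finset.sum_comm]
    exact Finset.sum_congr rfl fun j _ => Finset.sum_congr rfl fun i _ => by
      rw [hΘsymm.apply j i]; ring
  refine ⟨mul, ?_, ?_, ?_, ?_, ?_, ?_, ?_, ?_⟩
  · intro x y z
    simp only [hmuldef]
    rw [← add_smul]
    congr 1
    simp only [hBdef, Pi.add_apply]
    rw [← Finset.sum_add_distrib]
    exact Finset.sum_congr rfl fun i _ => by
      rw [← Finset.sum_add_distrib]
      exact Finset.sum_congr rfl fun j _ => by ring
  · intro r x y
    simp only [hmuldef, hBsmul, mul_smul]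
  · intro x y
    simp only [hmuldef, hBcomm x y]
  · intro x y z
    simp only [hmuldef, hBe, zero_smul]
    rw [hBcomm, hBe, zero_smul]
  · intro x y z
    simp only [hmuldef, hBe, zero_smul]
  · ext a
    simp only [Set.mem_setOf_eq, SetLike.mem_coe]
    constructor
    · intro h
      have h0 : ∀ x, B a x = 0 := by
        intro x
        have := congrFun (h x) L
        simpa [hmuldef, heL] using this
      set v : Fin (n - 1) → ℤ_[p] := fun i => a (ι i) with hvdef
      have hv : v = 0 := by
        apply hΘrank
        have hsymm' : ∀ i j, Θ i j = Θ j i := fun i j => (hΘsymm.apply j i)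
        funext j
        have h1 := h0 (Pi.single (ι j) 1)
        have h2 : B a (Pi.single (ι j) 1) = ∑ i, v i * Θ i j := by
          simp only [hBdef]
          refine Finset.sum_congr rfl fun i _ => ?_
          rw [Finset.sum_eq_single j]
          · rw [Pi.single_eq_same]; ring
          · intro b _ hb
            rw [Pi.single_eq_of_ne (fun hc => hb (Fin.castLE_injective _ hc)) 1]
            ring
          · intro hj; exact absurd (Finset.mem_univ j) hj
        rw [h2] at h1
        simp only [Matrix.mulVec, dotProduct, Pi.zero_apply]
        rw [← h1]
        exact Finset.sum_congr rfl fun i _ => by rw [hsymm' j i]; ring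
      have ha : a = a L • e := by
        funext k
        by_cases hk : (k : ℕ) = n - 1
        · have : k = L := Fin.ext hk
          rw [this]
          simp [heL]
        · have hklt : (k : ℕ) < n - 1 := by have := k.isLt; omega
          have hkι : k = ι ⟨(k : ℕ), hklt⟩ := Fin.ext rfl
          have h1 : a k = 0 := by
            rw [hkι]
            exact congrFun hv ⟨(k : ℕ), hklt⟩
          have h2 : e k = 0 := by rw [hkι]; exact heι _
          simp [h1, h2]
      exact Submodule.mem_span_singleton.mpr ⟨a L, ha.symm⟩
    · intro h x
      obtain ⟨r, hr⟩ := Submodule.mem_span_singleton.mp h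
      simp only [hmuldef]
      rw [← hr, hBe, zero_smul]
  · intro a b _ _
    rfl
  · set S : Submodule ℤ_[p] (Fin n → ℤ_[p]) :=
      Submodule.span ℤ_[p] {z : Fin n → ℤ_[p] | ∃ x y, z = mul x y} with hSdef
    set φ : ℤ_[p] →ₗ[ℤ_[p]] (Fin n → ℤ_[p]) :=
      LinearMap.toSpanSingleton ℤ_[p] (Fin n → ℤ_[p]) e with hφdef
    set I : Ideal ℤ_[p] := S.comap φ with hIdef
    obtain ⟨cg, hcg⟩ := (IsPrincipalIdealRing.principal I).principal
    refine ⟨cg • e, le_antisymm ?_ ?_⟩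
    · rw [Submodule.span_le]
      rintro z ⟨x, y, rfl⟩
      have hmem : B x y ∈ I := by
        simp only [hIdef, Submodule.mem_comap, hφdef, LinearMap.toSpanSingleton_apply]
        exact Submodule.subset_span ⟨x, y, rfl⟩
      rw [hcg] at hmem
      obtain ⟨r, hr⟩ := Submodule.mem_span_singleton.mp hmem
      have : mul x y = r • (cg • e) := by
        simp only [hmuldef, ← hr, smul_eq_mul, mul_smul]
      rw [SetLike.mem_coe, this]
      exact Submodule.smul_mem _ r (Submodule.mem_span_singleton_self _)
    · rw [Submodule.span_le, Set.singleton_subset_iff]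
      have hmem : cg ∈ I := by rw [hcg]; exact Submodule.mem_span_singleton_self cg
      simpa only [SetLike.mem_coe, hIdef, Submodule.mem_comap, hφdef, LinearMap.toSpanSingleton_apply]
        using hmem
end

section
/- Let p be odd, and let M₁ = (ℤ_p^n, +, ·₁) and M₂ = (ℤ_p^n, +, ·₂) be two commutative, torsion-free, 3-nilpotent ℤ_p-algebras with cyclic annihilators, whose products are given (as in the defining-matrix construction) by symmetric maximal-rank matrices Θ₁ and Θ₂. Then M₁ and M₂ are isomorphic as ℤ_p-algebras if and only if there exists a unimodular (n−1)×(n−1) matrix A over ℤ_p and a unit ε ∈ ℤ_p^× such that A Θ₁ Aᵗ = ε Θ₂. -/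
open Matrix

/-- The product on `ℤ_p^n` defined by a symmetric `(n−1)×(n−1)` matrix `Θ`:
`x·y = (π(x) Θ π(y)ᵗ) e_n`, where `π` projects onto the first `n−1` coordinates. -/
noncomputable def mulOf {p n : ℕ} [Fact p.Prime] (hn : 0 < n)
    (Θ : Matrix (Fin (n - 1)) (Fin (n - 1)) ℤ_[p])
    (x y : Fin n → ℤ_[p]) : Fin n → ℤ_[p] :=
  (∑ i : Fin (n - 1), ∑ j : Fin (n - 1),
      x (Fin.castLE (n.sub_le 1) i) * Θ i j * y (Fin.castLE (n.sub_le 1) j)) •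
    (Pi.single (⟨n - 1, Nat.sub_lt hn Nat.one_pos⟩ : Fin n) (1 : ℤ_[p]) :
      Fin n → ℤ_[p])

namespace StmtAux

variable {p n : ℕ} [Fact p.Prime]

/-- The distinguished last index. -/
def en (hn : 0 < n) : Fin n := ⟨n - 1, Nat.sub_lt hn Nat.one_pos⟩

lemma castLE_ne_en (hn : 0 < n) (i : Fin (n - 1)) :
    Fin.castLE (n.sub_le 1) i ≠ en hn := by
  intro h
  have := congrArg Fin.val h
  simp only [Fin.coe_castLE, en] at this
  exact absurd this (Nat.ne_of_lt i.isLt)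

lemma single_en_castLE (hn : 0 < n) (i : Fin (n - 1)) :
    (Pi.single (en hn) (1 : ℤ_[p]) : Fin n → ℤ_[p]) (Fin.castLE (n.sub_le 1) i) = 0 :=
  Pi.single_eq_of_ne (castLE_ne_en hn i) 1

lemma eq_en_or (hn : 0 < n) (j : Fin n) :
    j = en hn ∨ ∃ i : Fin (n - 1), j = Fin.castLE (n.sub_le 1) i := by
  by_cases h : (j : ℕ) < n - 1
  · exact Or.inr ⟨⟨j, h⟩, by ext; rfl⟩
  · left; ext; have := j.isLt; simp only [en]; omega

lemma mulOf_eq (hn : 0 < n) (Θ : Matrix (Fin (n - 1)) (Fin (n - 1)) ℤ_[p])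
    (x y : Fin n → ℤ_[p]) :
    mulOf hn Θ x y =
      (∑ i : Fin (n - 1), ∑ j : Fin (n - 1),
        x (Fin.castLE (n.sub_le 1) i) * Θ i j * y (Fin.castLE (n.sub_le 1) j)) •
        (Pi.single (en hn) (1 : ℤ_[p]) : Fin n → ℤ_[p]) := rfl

lemma sum_split {M : Type*} [AddCommMonoid M] (hn : 0 < n) (g : Fin n → M) :
    ∑ j, g j = (∑ i : Fin (n - 1), g (Fin.castLE (n.sub_le 1) i)) + g (en hn) := by
  obtain ⟨m, rfl⟩ : ∃ m, n = m + 1 := ⟨n - 1, (Nat.succ_pred_eq_of_pos hn).symm⟩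
  exact Fin.sum_univ_castSucc g

noncomputable def Fmap (B : Matrix (Fin (n - 1)) (Fin (n - 1)) ℤ_[p]) (c : ℤ_[p]) :
    (Fin n → ℤ_[p]) →ₗ[ℤ_[p]] (Fin n → ℤ_[p]) where
  toFun x := fun j => if h : (j : ℕ) < n - 1 then
      ∑ i, B ⟨j, h⟩ i * x (Fin.castLE (n.sub_le 1) i) else c * x j
  map_add' x y := by
    funext j
    by_cases h : (j : ℕ) < n - 1 <;>
      simp [h, mul_add, Finset.sum_add_distrib]
  map_smul' r x := by
    funext j
    by_cases h : (j : ℕ) < n - 1 <;>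
      simp [h, Finset.mul_sum, mul_left_comm]

lemma Fmap_castLE (B : Matrix (Fin (n - 1)) (Fin (n - 1)) ℤ_[p]) (c : ℤ_[p])
    (x : Fin n → ℤ_[p]) (i : Fin (n - 1)) :
    Fmap B c x (Fin.castLE (n.sub_le 1) i) =
      ∑ k, B i k * x (Fin.castLE (n.sub_le 1) k) := by
  simp only [Fmap, LinearMap.coe_mk, AddHom.coe_mk, Fin.coe_castLE, dif_pos i.isLt, Fin.eta]

lemma Fmap_en (hn : 0 < n) (B : Matrix (Fin (n - 1)) (Fin (n - 1)) ℤ_[p]) (c : ℤ_[p])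
    (x : Fin n → ℤ_[p]) : Fmap B c x (en hn) = c * x (en hn) := by
  simp only [Fmap, LinearMap.coe_mk, AddHom.coe_mk, en, dif_neg (lt_irrefl (n - 1))]

lemma Fmap_comp (B B' : Matrix (Fin (n - 1)) (Fin (n - 1)) ℤ_[p]) (c c' : ℤ_[p]) :
    (Fmap B' c').comp (Fmap B c) = Fmap (n := n) (B' * B) (c' * c) := by
  apply LinearMap.ext
  intro x
  funext j
  by_cases h : (j : ℕ) < n - 1
  · have hj : j = Fin.castLE (n.sub_le 1) ⟨j, h⟩ := by ext; rfl
    rw [hj, LinearMap.comp_apply, Fmap_castLE, Fmap_castLE]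
    simp only [Fmap_castLE, Finset.mul_sum]
    rw [Finset.sum_comm]
    simp only [Matrix.mul_apply, Finset.sum_mul]
    refine Finset.sum_congr rfl fun k _ => Finset.sum_congr rfl fun i _ => by ring
  · simp only [LinearMap.comp_apply, Fmap, LinearMap.coe_mk, AddHom.coe_mk, dif_neg h]
    ring

lemma Fmap_id : Fmap (1 : Matrix (Fin (n - 1)) (Fin (n - 1)) ℤ_[p]) 1 = LinearMap.id := by
  apply LinearMap.ext
  intro x
  funext j
  by_cases h : (j : ℕ) < n - 1
  · have hj : j = Fin.castLE (n.sub_le 1) ⟨j, h⟩ := by ext; rfl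
    rw [hj, Fmap_castLE]
    simp [Matrix.one_apply]
  · simp only [Fmap, LinearMap.coe_mk, AddHom.coe_mk, dif_neg h, one_mul,
      LinearMap.id_coe, id_eq]

/-- The linear equivalence attached to a unimodular `B` and unit `c`. -/
noncomputable def Fequiv (B B' : Matrix (Fin (n - 1)) (Fin (n - 1)) ℤ_[p]) (c c' : ℤ_[p])
    (hBB' : B * B' = 1) (hB'B : B' * B = 1) (hcc' : c * c' = 1) (hc'c : c' * c = 1) :
    (Fin n → ℤ_[p]) ≃ₗ[ℤ_[p]] (Fin n → ℤ_[p]) :=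
  LinearEquiv.ofLinear (Fmap B c) (Fmap B' c')
    (by rw [Fmap_comp, hBB', hcc', Fmap_id])
    (by rw [Fmap_comp, hB'B, hc'c, Fmap_id])

/-- The annihilator element kills everything. -/
lemma ann_en (hn : 0 < n) (Θ : Matrix (Fin (n - 1)) (Fin (n - 1)) ℤ_[p])
    (y : Fin n → ℤ_[p]) :
    mulOf hn Θ (Pi.single (en hn) 1) y = 0 := by
  rw [mulOf_eq]
  simp only [single_en_castLE, zero_mul, Finset.sum_const_zero, zero_smul]

/-- `f` maps the annihilator generator to a multiple of itself. -/
lemma f_single_en (hn : 0 < n) {Θ₁ Θ₂ : Matrix (Fin (n - 1)) (Fin (n - 1)) ℤ_[p]}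
    (h₂symm : Θ₂.IsSymm)
    (h₂rank : ∀ v : Fin (n - 1) → ℤ_[p], Θ₂.mulVec v = 0 → v = 0)
    (f : (Fin n → ℤ_[p]) ≃ₗ[ℤ_[p]] (Fin n → ℤ_[p]))
    (hf : ∀ x y, f (mulOf hn Θ₁ x y) = mulOf hn Θ₂ (f x) (f y)) :
    f (Pi.single (en hn) 1) =
      (f (Pi.single (en hn) 1) (en hn)) • (Pi.single (en hn) (1 : ℤ_[p]) : Fin n → ℤ_[p]) := by
  have hz : ∀ z, mulOf hn Θ₂ (f (Pi.single (en hn) 1)) z = 0 := by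
    intro z
    have h := hf (Pi.single (en hn) 1) (f.symm z)
    rw [ann_en, map_zero, f.apply_symm_apply] at h
    exact h.symm
  set w : Fin (n - 1) → ℤ_[p] := fun i => f (Pi.single (en hn) 1) (Fin.castLE (n.sub_le 1) i)
    with hw
  have hwv : Θ₂.mulVec w = 0 := by
    funext j
    have h := congrFun (hz (Pi.single (Fin.castLE (n.sub_le 1) j) 1)) (en hn)
    rw [mulOf_eq] at h
    simp only [Pi.single_apply, Fin.castLE_inj, mul_ite, mul_one, mul_zero,
      Finset.sum_ite_eq', Finset.mem_univ, if_true, Pi.smul_apply, Pi.single_eq_same,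
      smul_eq_mul, Pi.zero_apply] at h
    simp only [Pi.zero_apply]
    show (∑ k, Θ₂ j k * w k) = 0
    rw [← h]
    exact Finset.sum_congr rfl fun i _ => by rw [← h₂symm.apply i j]; ring
  have hw0 : w = 0 := h₂rank w hwv
  funext j
  rcases eq_en_or hn j with rfl | ⟨i, rfl⟩
  · simp
  · have : f (Pi.single (en hn) 1) (Fin.castLE (n.sub_le 1) i) = 0 := by
      have := congrFun hw0 i; simpa [hw] using this
    rw [this, Pi.smul_apply, single_en_castLE hn, smul_eq_mul, mul_zero]

lemma apply_castLE_eq (hn : 0 < n)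
    (f : (Fin n → ℤ_[p]) ≃ₗ[ℤ_[p]] (Fin n → ℤ_[p]))
    (h0 : ∀ i : Fin (n - 1), f (Pi.single (en hn) 1) (Fin.castLE (n.sub_le 1) i) = 0)
    (x : Fin n → ℤ_[p]) (i : Fin (n - 1)) :
    f x (Fin.castLE (n.sub_le 1) i) =
      ∑ k, f (Pi.single (Fin.castLE (n.sub_le 1) k) 1) (Fin.castLE (n.sub_le 1) i)
        * x (Fin.castLE (n.sub_le 1) k) := by
  have hx : x = ∑ j, x j • (Pi.single j (1 : ℤ_[p]) : Fin n → ℤ_[p]) := by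
    funext k
    rw [Finset.sum_apply]
    simp only [Pi.smul_apply, smul_eq_mul, Pi.single_apply, mul_ite, mul_one, mul_zero,
      Finset.sum_ite_eq, Finset.mem_univ, if_true]
  conv_lhs => rw [hx]
  rw [map_sum]
  simp only [_root_.map_smul]
  rw [Finset.sum_apply]
  simp only [Pi.smul_apply, smul_eq_mul]
  rw [sum_split hn (fun j => x j * f (Pi.single j 1) (Fin.castLE (n.sub_le 1) i))]
  rw [h0 i, mul_zero, add_zero]
  exact Finset.sum_congr rfl fun k _ => mul_comm _ _

lemma sum_eq_dot {m : ℕ} {R : Type*} [CommRing R] (M : Matrix (Fin m) (Fin m) R)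
    (u v : Fin m → R) :
    ∑ i, ∑ j, u i * M i j * v j = u ⬝ᵥ M.mulVec v := by
  simp [dotProduct, Matrix.mulVec, Finset.mul_sum, mul_assoc]

lemma quad {m : ℕ} {R : Type*} [CommRing R] {B Θ₁ Θ₂ : Matrix (Fin m) (Fin m) R} {c : R}
    (hkey : Bᵀ * Θ₂ * B = c • Θ₁) (u v : Fin m → R) :
    ∑ i, ∑ j, (∑ k, B i k * u k) * Θ₂ i j * (∑ l, B j l * v l)
      = c * ∑ k, ∑ l, u k * Θ₁ k l * v l := by
  have h1 : ∀ i, (∑ k, B i k * u k) = B.mulVec u i := by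
    intro i; simp [Matrix.mulVec, dotProduct]
  have h2 : ∀ j, (∑ l, B j l * v l) = B.mulVec v j := by
    intro j; simp [Matrix.mulVec, dotProduct]
  simp only [h1, h2]
  rw [sum_eq_dot, sum_eq_dot]
  rw [Matrix.mulVec_mulVec, Matrix.dotProduct_mulVec, ← Matrix.vecMul_transpose,
    Matrix.vecMul_vecMul, ← Matrix.mul_assoc, hkey]
  have : u ᵥ* (c • Θ₁) = c • (u ᵥ* Θ₁) := by
    ext i; simp [Matrix.vecMul, dotProduct, Finset.mul_sum, mul_left_comm]
  rw [this, smul_dotProduct, ← Matrix.dotProduct_mulVec, smul_eq_mul]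

/-- `Fmap B c` respects the products when `Bᵀ Θ₂ B = c • Θ₁`. -/
lemma Fmap_mulOf (hn : 0 < n) {B Θ₁ Θ₂ : Matrix (Fin (n - 1)) (Fin (n - 1)) ℤ_[p]}
    {c : ℤ_[p]} (hkey : Bᵀ * Θ₂ * B = c • Θ₁) (x y : Fin n → ℤ_[p]) :
    Fmap B c (mulOf hn Θ₁ x y) = mulOf hn Θ₂ (Fmap B c x) (Fmap B c y) := by
  funext j
  rcases eq_en_or hn j with rfl | ⟨i, rfl⟩
  · rw [mulOf_eq, Fmap_en, mulOf_eq]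
    simp only [Pi.smul_apply, Pi.single_eq_same, smul_eq_mul, mul_one]
    rw [← quad hkey (fun k => x (Fin.castLE (n.sub_le 1) k))
      (fun k => y (Fin.castLE (n.sub_le 1) k))]
    simp only [Fmap_castLE]
  · rw [mulOf_eq, mulOf_eq]
    have hi : (Fin.castLE (n.sub_le 1) i : ℕ) < n - 1 := i.isLt
    rw [Fmap_castLE]
    simp only [Pi.smul_apply, single_en_castLE hn, smul_eq_mul, mul_zero,
      Finset.sum_const_zero]

end StmtAux

open StmtAux in
/-- the algebras on `ℤ_p^n` with defining matrices `Θ₁`, `Θ₂` are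
isomorphic if and only if `A Θ₁ Aᵗ = ε Θ₂` for some unimodular `A` and unit `ε`. -/
theorem isomorphic_iff_congruent_up_to_unit {p n : ℕ} [Fact p.Prime] (hp : p ≠ 2)
    (hn : 0 < n)
    (Θ₁ Θ₂ : Matrix (Fin (n - 1)) (Fin (n - 1)) ℤ_[p])
    (h₁symm : Θ₁.IsSymm) (h₂symm : Θ₂.IsSymm)
    (h₁rank : ∀ v : Fin (n - 1) → ℤ_[p], Θ₁.mulVec v = 0 → v = 0)
    (h₂rank : ∀ v : Fin (n - 1) → ℤ_[p], Θ₂.mulVec v = 0 → v = 0) :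
    (∃ f : (Fin n → ℤ_[p]) ≃ₗ[ℤ_[p]] (Fin n → ℤ_[p]),
        ∀ x y : Fin n → ℤ_[p], f (mulOf hn Θ₁ x y) = mulOf hn Θ₂ (f x) (f y))
      ↔ (∃ A : Matrix (Fin (n - 1)) (Fin (n - 1)) ℤ_[p],
          IsUnit A.det ∧ ∃ ε : ℤ_[p]ˣ, A * Θ₁ * Aᵀ = (ε : ℤ_[p]) • Θ₂) := by
  constructor
  · rintro ⟨f, hf⟩
    have hf' : ∀ x y, f.symm (mulOf hn Θ₂ x y) = mulOf hn Θ₁ (f.symm x) (f.symm y) := by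
      intro x y
      apply f.injective
      rw [hf, f.apply_symm_apply, f.apply_symm_apply, f.apply_symm_apply]
    have hfe := f_single_en hn h₂symm h₂rank f hf
    have hfe' := f_single_en hn h₁symm h₁rank f.symm hf'
    set u : ℤ_[p] := f (Pi.single (en hn) 1) (en hn) with hu
    set u' : ℤ_[p] := f.symm (Pi.single (en hn) 1) (en hn) with hu'
    have hu'u : u' * u = 1 := by
      have h := f.apply_symm_apply (Pi.single (en hn) 1)
      rw [hfe', _root_.map_smul, hfe] at h
      have h2 := congrFun h (en hn)
      simpa [smul_smul] using h2
    have huu' : u * u' = 1 := by rw [mul_comm]; exact hu'u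
    have h0 : ∀ i : Fin (n - 1),
        f (Pi.single (en hn) 1) (Fin.castLE (n.sub_le 1) i) = 0 := by
      intro i; rw [hfe, Pi.smul_apply, single_en_castLE hn, smul_eq_mul, mul_zero]
    have h0' : ∀ i : Fin (n - 1),
        f.symm (Pi.single (en hn) 1) (Fin.castLE (n.sub_le 1) i) = 0 := by
      intro i; rw [hfe', Pi.smul_apply, single_en_castLE hn, smul_eq_mul, mul_zero]
    set B : Matrix (Fin (n - 1)) (Fin (n - 1)) ℤ_[p] :=
      fun i k => f (Pi.single (Fin.castLE (n.sub_le 1) k) 1) (Fin.castLE (n.sub_le 1) i)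
      with hB
    set B' : Matrix (Fin (n - 1)) (Fin (n - 1)) ℤ_[p] :=
      fun i k => f.symm (Pi.single (Fin.castLE (n.sub_le 1) k) 1) (Fin.castLE (n.sub_le 1) i)
      with hB'
    have hfx : ∀ x i, f x (Fin.castLE (n.sub_le 1) i)
        = ∑ k, B i k * x (Fin.castLE (n.sub_le 1) k) :=
      fun x i => apply_castLE_eq hn f h0 x i
    have hfx' : ∀ x i, f.symm x (Fin.castLE (n.sub_le 1) i)
        = ∑ k, B' i k * x (Fin.castLE (n.sub_le 1) k) :=
      fun x i => apply_castLE_eq hn f.symm h0' x i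
    have hsingle : ∀ (a k : Fin (n - 1)),
        (Pi.single (Fin.castLE (n.sub_le 1) a) (1 : ℤ_[p]) : Fin n → ℤ_[p])
          (Fin.castLE (n.sub_le 1) k) = if k = a then 1 else 0 := by
      intro a k; rw [Pi.single_apply]; simp [Fin.castLE_inj]
    have hmat : Bᵀ * Θ₂ * B = u • Θ₁ := by
      ext a b
      have hL : mulOf hn Θ₁ (Pi.single (Fin.castLE (n.sub_le 1) a) 1)
          (Pi.single (Fin.castLE (n.sub_le 1) b) 1)
          = Θ₁ a b • (Pi.single (en hn) (1 : ℤ_[p]) : Fin n → ℤ_[p]) := by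
        rw [mulOf_eq]
        congr 1
        simp only [hsingle, ite_mul, mul_ite, one_mul, zero_mul, mul_one, mul_zero,
          Finset.sum_ite_eq', Finset.mem_univ, if_true]
      have h := hf (Pi.single (Fin.castLE (n.sub_le 1) a) 1)
        (Pi.single (Fin.castLE (n.sub_le 1) b) 1)
      rw [hL, _root_.map_smul, hfe, mulOf_eq] at h
      have h2 := congrFun h (en hn)
      simp only [Pi.smul_apply, Pi.single_eq_same, smul_eq_mul, mul_one] at h2
      simp only [show ∀ i : Fin (n - 1),
          f (Pi.single (Fin.castLE (n.sub_le 1) a) 1) (Fin.castLE (n.sub_le 1) i) = B i a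
          from fun _ => rfl,
        show ∀ j : Fin (n - 1),
          f (Pi.single (Fin.castLE (n.sub_le 1) b) 1) (Fin.castLE (n.sub_le 1) j) = B j b
          from fun _ => rfl] at h2
      calc (Bᵀ * Θ₂ * B) a b = ∑ i, ∑ j, B i a * Θ₂ i j * B j b := by
            simp only [Matrix.mul_apply, Matrix.transpose_apply, Finset.sum_mul]
            rw [Finset.sum_comm]
        _ = Θ₁ a b * u := h2.symm
        _ = (u • Θ₁) a b := by simp [mul_comm]
    have hBB' : B * B' = 1 := by
      ext i k
      have h := congrFun (f.apply_symm_apply (Pi.single (Fin.castLE (n.sub_le 1) k) 1))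
        (Fin.castLE (n.sub_le 1) i)
      rw [hfx] at h
      simp only [show ∀ j : Fin (n - 1),
          f.symm (Pi.single (Fin.castLE (n.sub_le 1) k) 1) (Fin.castLE (n.sub_le 1) j) = B' j k
          from fun _ => rfl] at h
      rw [hsingle k i] at h
      rw [Matrix.mul_apply, Matrix.one_apply]
      exact h
    have hdet : IsUnit B'ᵀ.det := by
      rw [Matrix.det_transpose]
      have hd : B'.det * B.det = 1 := by
        rw [mul_comm, ← Matrix.det_mul, hBB', Matrix.det_one]
      exact IsUnit.of_mul_eq_one _ hd
    refine ⟨B'ᵀ, hdet, ⟨⟨u', u, hu'u, huu'⟩, ?_⟩⟩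
    show B'ᵀ * Θ₁ * B'ᵀᵀ = u' • Θ₂
    rw [Matrix.transpose_transpose]
    have h3 : Θ₂ = u • (B'ᵀ * Θ₁ * B') := by
      calc Θ₂ = (B * B')ᵀ * Θ₂ * (B * B') := by rw [hBB']; simp
        _ = B'ᵀ * (Bᵀ * Θ₂ * B) * B' := by simp only [Matrix.transpose_mul, Matrix.mul_assoc]
        _ = B'ᵀ * (u • Θ₁) * B' := by rw [hmat]
        _ = u • (B'ᵀ * Θ₁ * B') := by rw [Matrix.mul_smul, Matrix.smul_mul]
    rw [h3, smul_smul, hu'u, one_smul]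
  · rintro ⟨A, hA, ε, hAΘ⟩
    set B : Matrix (Fin (n - 1)) (Fin (n - 1)) ℤ_[p] := (A⁻¹)ᵀ with hB
    set B' : Matrix (Fin (n - 1)) (Fin (n - 1)) ℤ_[p] := Aᵀ with hB'
    have hBB' : B * B' = 1 := by
      rw [hB, hB', ← Matrix.transpose_mul, Matrix.mul_nonsing_inv A hA, Matrix.transpose_one]
    have hB'B : B' * B = 1 := by
      rw [hB, hB', ← Matrix.transpose_mul, Matrix.nonsing_inv_mul A hA, Matrix.transpose_one]
    have hkey : Bᵀ * Θ₂ * B = ((ε⁻¹ : ℤ_[p]ˣ) : ℤ_[p]) • Θ₁ := by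
      have hBt : Bᵀ = A⁻¹ := by rw [hB, Matrix.transpose_transpose]
      have h2 : A⁻¹ * (A * Θ₁ * Aᵀ) * (A⁻¹)ᵀ = Θ₁ := by
        have hAt : Aᵀ * (A⁻¹)ᵀ = 1 := by
          rw [← Matrix.transpose_mul, Matrix.nonsing_inv_mul A hA, Matrix.transpose_one]
        calc A⁻¹ * (A * Θ₁ * Aᵀ) * (A⁻¹)ᵀ
            = (A⁻¹ * A) * (Θ₁ * (Aᵀ * (A⁻¹)ᵀ)) := by simp only [Matrix.mul_assoc]
          _ = Θ₁ := by rw [Matrix.nonsing_inv_mul A hA, hAt, Matrix.mul_one, Matrix.one_mul]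
      rw [hAΘ] at h2
      rw [hBt, hB]
      calc A⁻¹ * Θ₂ * (A⁻¹)ᵀ
          = ((ε⁻¹ : ℤ_[p]ˣ) : ℤ_[p]) • (A⁻¹ * ((ε : ℤ_[p]) • Θ₂) * (A⁻¹)ᵀ) := by
            rw [Matrix.mul_smul, Matrix.smul_mul, smul_smul, Units.inv_mul, one_smul]
        _ = ((ε⁻¹ : ℤ_[p]ˣ) : ℤ_[p]) • Θ₁ := by rw [h2]
    refine ⟨Fequiv B B' ((ε⁻¹ : ℤ_[p]ˣ) : ℤ_[p]) ((ε : ℤ_[p])) hBB' hB'B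
      (Units.inv_mul ε) (Units.mul_inv ε), fun x y => ?_⟩
    exact Fmap_mulOf hn hkey x y
end
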